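/- Let M, M̃, M̄ be three mean-field MDPs on the same finite S, A, horizon H and initial distribution μ₁. For all policies π, π̃ ∈ Π: E_{π̃,M̃(π)}[Σ_{h=1}^H ‖P_{M̃,h}(·|s_h,a_h,μ^π_{M̃,h}) − P_{M̄,h}(·|s_h,a_h,μ^π_{M̄,h})‖₁] ≤ E_{π̃,M(π)}[Σ_{h=1}^H ‖P_{M,h}(·|s_h,a_h,μ^π_{M,h}) − P_{M̄,h}(·|s_h,a_h,μ^π_{M̄,h})‖₁] + (H+1) · E_{π̃,M(π)}[Σ_{h=1}^H ‖P_{M,h}(·|s_h,a_h,μ^π_{M,h}) − P_{M̃,h}(·|s_h,a_h,μ^π_{M̃,h})‖₁]. -/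

import Mathlib

/-- ℓ1 distance between two functions on a finite type. -/
def l1 {X : Type*} [Fintype X] (p q : X → ℝ) : ℝ := ∑ x, |p x - q x|

/-- A (nonstationary Markov) policy: at each step `h` (0-indexed) and state `s`,
`π h s` is a probability distribution over actions. -/
def IsPolicy {S A : Type*} [Fintype A] (π : ℕ → S → A → ℝ) : Prop :=
  ∀ h s, (∀ a, 0 ≤ π h s a) ∧ ∑ a, π h s a = 1

/-- The transition kernels of a mean-field MDP with horizon `H`:
at each step `h < H`, `P h s a μ ∈ Δ(S)` whenever `μ ∈ Δ(S)`. -/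
def IsKernel {S A : Type*} [Fintype S] (H : ℕ) (P : ℕ → S → A → (S → ℝ) → S → ℝ) : Prop :=
  ∀ h, h < H → ∀ s a (μ : S → ℝ), μ ∈ stdSimplex ℝ S → P h s a μ ∈ stdSimplex ℝ S

/-- Induced state densities: `dens P μ₁ π h = μ^π_{M,h+1}` (1-indexed step `h+1`). -/
def dens {S A : Type*} [Fintype S] [Fintype A] (P : ℕ → S → A → (S → ℝ) → S → ℝ)
    (μ₁ : S → ℝ) (π : ℕ → S → A → ℝ) : ℕ → S → ℝ
  | 0 => μ₁
  | h + 1 => fun s' => ∑ s, ∑ a, dens P μ₁ π h s * π h s a * P h s a (dens P μ₁ π h) s'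

/-- The state law of executing `π̃` while the kernels are frozen at the densities induced
by the reference policy `π` in model `M = (P, μ₁)`. -/
def densF {S A : Type*} [Fintype S] [Fintype A] (P : ℕ → S → A → (S → ℝ) → S → ℝ)
    (μ₁ : S → ℝ) (π πt : ℕ → S → A → ℝ) : ℕ → S → ℝ
  | 0 => μ₁
  | h + 1 => fun s' => ∑ s, ∑ a, densF P μ₁ π πt h s * πt h s a * P h s a (dens P μ₁ π h) s'

/-- `E_{π̃,M(π)}[Σ_{h=1}^H f_h(s_h,a_h)]`. -/
def expF {S A : Type*} [Fintype S] [Fintype A] (H : ℕ) (P : ℕ → S → A → (S → ℝ) → S → ℝ)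
    (μ₁ : S → ℝ) (π πt : ℕ → S → A → ℝ) (f : ℕ → S → A → ℝ) : ℝ :=
  ∑ h ∈ Finset.range H, ∑ s, ∑ a, densF P μ₁ π πt h s * πt h s a * f h s a

/-- The return `J_M(π̃;π)` of executing `π̃` with transitions and rewards frozen by `π`. -/
def Jret {S A : Type*} [Fintype S] [Fintype A] (H : ℕ) (P : ℕ → S → A → (S → ℝ) → S → ℝ)
    (r : ℕ → S → A → (S → ℝ) → ℝ) (μ₁ : S → ℝ) (πt π : ℕ → S → A → ℝ) : ℝ :=
  expF H P μ₁ π πt fun h s a => r h s a (dens P μ₁ π h)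

/-- One-sided conditional model distance `d^{π̃}(M,M'|π)`. -/
def dCond {S A : Type*} [Fintype S] [Fintype A] (H : ℕ)
    (P P' : ℕ → S → A → (S → ℝ) → S → ℝ) (μ₁ : S → ℝ) (π πt : ℕ → S → A → ℝ) : ℝ :=
  expF H P μ₁ π πt fun h s a => l1 (P h s a (dens P μ₁ π h)) (P' h s a (dens P' μ₁ π h))

/-!
Write `ν̃_h`, `ν_h` for the state laws of `π̃` in `M̃(π)` and `M(π)`. Every integrand here is an
`ℓ1` distance of probability vectors, hence lies in `[0, 2]`, and for such integrands passing from
`ν̃_h` to `ν_h` costs at most `‖ν̃_h - ν_h‖₁`. Under `ν_h` the triangle inequality splits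
`‖P_M̃ - P_M̄‖₁` into `‖P_M - P_M̄‖₁ + ‖P_M - P_M̃‖₁`. Finally, by the simulation lemma,
`‖ν̃_h - ν_h‖₁` is at most the expected `‖P_M - P_M̃‖₁` accumulated before step `h`, so the `H`
drift terms together cost at most `H` times the last expectation.
-/

open Finset

section Distributions

variable {S A : Type*} [Fintype S] [Fintype A]

lemma l1_nonneg (p q : S → ℝ) : 0 ≤ l1 p q := sum_nonneg fun _ _ => abs_nonneg _

lemma l1_self (p : S → ℝ) : l1 p p = 0 := by simp [l1]

lemma l1_comm (p q : S → ℝ) : l1 p q = l1 q p :=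
  sum_congr rfl fun _ _ => abs_sub_comm _ _

lemma l1_triangle (p q r : S → ℝ) : l1 p r ≤ l1 p q + l1 q r := by
  rw [l1, l1, l1, ← sum_add_distrib]
  exact sum_le_sum fun _ _ => abs_sub_le _ _ _

lemma l1_le_two {p q : S → ℝ} (hp : p ∈ stdSimplex ℝ S) (hq : q ∈ stdSimplex ℝ S) :
    l1 p q ≤ 2 := by
  calc l1 p q ≤ ∑ x, (p x + q x) :=
        sum_le_sum fun x _ => abs_sub_le_iff.mpr ⟨by linarith [hq.1 x], by linarith [hp.1 x]⟩
    _ = 2 := by rw [sum_add_distrib, hp.2, hq.2]; norm_num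

def nextLaw (ν : S → ℝ) (ρ : S → A → ℝ) (K : S → A → S → ℝ) : S → ℝ :=
  fun s' => ∑ s, ∑ a, ν s * ρ s a * K s a s'

lemma nextLaw_mem_stdSimplex {ν : S → ℝ} (hν : ν ∈ stdSimplex ℝ S) {ρ : S → A → ℝ}
    (hρ : ∀ s, ρ s ∈ stdSimplex ℝ A) {K : S → A → S → ℝ}
    (hK : ∀ s a, K s a ∈ stdSimplex ℝ S) : nextLaw ν ρ K ∈ stdSimplex ℝ S := by
  refine ⟨fun s' => sum_nonneg fun s _ => sum_nonneg fun a _ =>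
    mul_nonneg (mul_nonneg (hν.1 s) ((hρ s).1 a)) ((hK s a).1 s'), ?_⟩
  calc ∑ s', nextLaw ν ρ K s' = ∑ s, ∑ a, ν s * ρ s a * ∑ s', K s a s' := by
        simp only [nextLaw, mul_sum]
        rw [sum_comm]
        exact sum_congr rfl fun _ _ => sum_comm
    _ = 1 := by simp only [(hK _ _).2, mul_one, ← mul_sum, (hρ _).2, hν.2]

lemma l1_nextLaw_le {ν ν' : S → ℝ} (hν' : ∀ s, 0 ≤ ν' s) {ρ : S → A → ℝ}
    (hρ : ∀ s, ρ s ∈ stdSimplex ℝ A) {K K' : S → A → S → ℝ}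
    (hK : ∀ s a, K s a ∈ stdSimplex ℝ S) :
    l1 (nextLaw ν ρ K) (nextLaw ν' ρ K') ≤
      l1 ν ν' + ∑ s, ∑ a, ν' s * ρ s a * l1 (K s a) (K' s a) := by
  have pointwise : ∀ s a s', |ν s * ρ s a * K s a s' - ν' s * ρ s a * K' s a s'| ≤
      |ν s - ν' s| * ρ s a * K s a s' + ν' s * ρ s a * |K s a s' - K' s a s'| := by
    intro s a s'
    have hρ₀ := (hρ s).1 a
    have hK₀ := (hK s a).1 s'
    calc |ν s * ρ s a * K s a s' - ν' s * ρ s a * K' s a s'|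
        = |(ν s - ν' s) * ρ s a * K s a s' + ν' s * ρ s a * (K s a s' - K' s a s')| := by
          congr 1; ring
      _ ≤ _ := by
          refine (abs_add_le _ _).trans (le_of_eq ?_)
          rw [abs_mul, abs_mul, abs_mul, abs_mul, abs_of_nonneg hρ₀, abs_of_nonneg hK₀,
            abs_of_nonneg (hν' s)]
  calc l1 (nextLaw ν ρ K) (nextLaw ν' ρ K')
      ≤ ∑ s', ∑ s, ∑ a, (|ν s - ν' s| * ρ s a * K s a s' +
          ν' s * ρ s a * |K s a s' - K' s a s'|) := by
        refine sum_le_sum fun s' _ => ?_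
        simp only [nextLaw, ← sum_sub_distrib]
        exact (abs_sum_le_sum_abs _ _).trans
          (sum_le_sum fun s _ => (abs_sum_le_sum_abs _ _).trans
            (sum_le_sum fun a _ => pointwise s a s'))
    _ = ∑ s, ∑ a, (|ν s - ν' s| * ρ s a * ∑ s', K s a s' +
          ν' s * ρ s a * l1 (K s a) (K' s a)) := by
        rw [sum_comm]
        refine sum_congr rfl fun s _ => ?_
        rw [sum_comm]
        exact sum_congr rfl fun a _ => by simp only [l1, mul_sum, sum_add_distrib]
    _ = l1 ν ν' + ∑ s, ∑ a, ν' s * ρ s a * l1 (K s a) (K' s a) := by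
        simp only [(hK _ _).2, mul_one, sum_add_distrib, ← mul_sum, (hρ _).2, l1]

/-- Since `c - 1` takes values in `[-1, 1]` and the two laws have the same mass,
`∑ (ν - ν') c = ∑ (ν - ν') (c - 1) ≤ ‖ν - ν'‖₁`. -/
lemma sum_mul_le_sum_mul_add_l1 {ν ν' : S → ℝ} (hmass : ∑ s, ν s = ∑ s, ν' s) {c : S → ℝ}
    (hc : ∀ s, c s ∈ Set.Icc 0 2) :
    ∑ s, ν s * c s ≤ ∑ s, ν' s * c s + l1 ν ν' := by
  have shift : ∑ s, ν s * c s - ∑ s, ν' s * c s = ∑ s, (ν s - ν' s) * (c s - 1) := by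
    simp only [sub_mul, mul_sub, mul_one, sum_sub_distrib, hmass]
    ring
  have bound : ∑ s, (ν s - ν' s) * (c s - 1) ≤ l1 ν ν' := by
    refine sum_le_sum fun s _ => ?_
    calc (ν s - ν' s) * (c s - 1) ≤ |ν s - ν' s| * |c s - 1| := by
          rw [← abs_mul]; exact le_abs_self _
      _ ≤ |ν s - ν' s| * 1 := by
          gcongr
          exact abs_le.mpr ⟨by linarith [(hc s).1], by linarith [(hc s).2]⟩
      _ = |ν s - ν' s| := mul_one _
  linarith

end Distributions

section MeanFieldMDP

variable {S A : Type*} [Fintype S] [Fintype A] {H : ℕ} {P Pt : ℕ → S → A → (S → ℝ) → S → ℝ}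
  {μ₁ : S → ℝ} {π πt : ℕ → S → A → ℝ}

lemma dens_succ (h : ℕ) :
    dens P μ₁ π (h + 1) = nextLaw (dens P μ₁ π h) (π h) (fun s a => P h s a (dens P μ₁ π h)) :=
  rfl

lemma densF_succ (h : ℕ) :
    densF P μ₁ π πt (h + 1) =
      nextLaw (densF P μ₁ π πt h) (πt h) (fun s a => P h s a (dens P μ₁ π h)) :=
  rfl

lemma dens_mem_stdSimplex (hμ₁ : μ₁ ∈ stdSimplex ℝ S) (hP : IsKernel H P) (hπ : IsPolicy π) :
    ∀ h ≤ H, dens P μ₁ π h ∈ stdSimplex ℝ S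
  | 0, _ => hμ₁
  | h + 1, hh => by
    have ih := dens_mem_stdSimplex hμ₁ hP hπ h (by omega)
    exact dens_succ (P := P) h ▸ nextLaw_mem_stdSimplex ih (hπ h) fun s a => hP h hh s a _ ih

lemma densF_mem_stdSimplex (hμ₁ : μ₁ ∈ stdSimplex ℝ S) (hP : IsKernel H P) (hπ : IsPolicy π)
    (hπt : IsPolicy πt) : ∀ h ≤ H, densF P μ₁ π πt h ∈ stdSimplex ℝ S
  | 0, _ => hμ₁
  | h + 1, hh => by
    have ih := densF_mem_stdSimplex hμ₁ hP hπ hπt h (by omega)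
    exact densF_succ (P := P) h ▸ nextLaw_mem_stdSimplex ih (hπt h)
      fun s a => hP h hh s a _ (dens_mem_stdSimplex hμ₁ hP hπ h (by omega))

lemma expF_add (f g : ℕ → S → A → ℝ) :
    expF H P μ₁ π πt (fun h s a => f h s a + g h s a) =
      expF H P μ₁ π πt f + expF H P μ₁ π πt g := by
  simp only [expF, mul_add, sum_add_distrib]

lemma expF_mono (hμ₁ : μ₁ ∈ stdSimplex ℝ S) (hP : IsKernel H P) (hπ : IsPolicy π)
    (hπt : IsPolicy πt) {f g : ℕ → S → A → ℝ} (hfg : ∀ h < H, ∀ s a, f h s a ≤ g h s a) :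
    expF H P μ₁ π πt f ≤ expF H P μ₁ π πt g := by
  refine sum_le_sum fun h hh => sum_le_sum fun s _ => sum_le_sum fun a _ => ?_
  have hh := mem_range.mp hh
  exact mul_le_mul_of_nonneg_left (hfg h hh s a)
    (mul_nonneg ((densF_mem_stdSimplex hμ₁ hP hπ hπt h hh.le).1 s) ((hπt h s).1 a))

lemma expF_mono_horizon (hμ₁ : μ₁ ∈ stdSimplex ℝ S) (hP : IsKernel H P) (hπ : IsPolicy π)
    (hπt : IsPolicy πt) {f : ℕ → S → A → ℝ} (hf : ∀ h < H, ∀ s a, 0 ≤ f h s a) {H' : ℕ}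
    (hH' : H' ≤ H) : expF H' P μ₁ π πt f ≤ expF H P μ₁ π πt f := by
  refine sum_le_sum_of_subset_of_nonneg (range_subset_range.mpr hH') fun h hh _ => ?_
  have hh := mem_range.mp hh
  exact sum_nonneg fun s _ => sum_nonneg fun a _ => mul_nonneg
    (mul_nonneg ((densF_mem_stdSimplex hμ₁ hP hπ hπt h hh.le).1 s) ((hπt h s).1 a))
    (hf h hh s a)

lemma l1_densF_le_expF (hμ₁ : μ₁ ∈ stdSimplex ℝ S) (hP : IsKernel H P) (hPt : IsKernel H Pt)
    (hπ : IsPolicy π) (hπt : IsPolicy πt) :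
    ∀ h ≤ H, l1 (densF Pt μ₁ π πt h) (densF P μ₁ π πt h) ≤
      expF h P μ₁ π πt fun k s a => l1 (P k s a (dens P μ₁ π k)) (Pt k s a (dens Pt μ₁ π k))
  | 0, _ => by simp [densF, l1_self, expF]
  | h + 1, hh => by
    have ih := l1_densF_le_expF hμ₁ hP hPt hπ hπt h (by omega)
    have step := l1_nextLaw_le (ν := densF Pt μ₁ π πt h)
      (K' := fun s a => P h s a (dens P μ₁ π h))
      (densF_mem_stdSimplex hμ₁ hP hπ hπt h (by omega)).1 (hπt h)
      fun s a => hPt h hh s a _ (dens_mem_stdSimplex hμ₁ hPt hπ h (by omega))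
    rw [densF_succ, densF_succ, expF, sum_range_succ]
    simp only [l1_comm (Pt _ _ _ _)] at step
    exact step.trans (add_le_add ih le_rfl)

lemma sum_l1_densF_le (hμ₁ : μ₁ ∈ stdSimplex ℝ S) (hP : IsKernel H P) (hPt : IsKernel H Pt)
    (hπ : IsPolicy π) (hπt : IsPolicy πt) :
    ∑ h ∈ range H, l1 (densF Pt μ₁ π πt h) (densF P μ₁ π πt h) ≤
      H * expF H P μ₁ π πt
        fun k s a => l1 (P k s a (dens P μ₁ π k)) (Pt k s a (dens Pt μ₁ π k)) := by
  calc ∑ h ∈ range H, l1 (densF Pt μ₁ π πt h) (densF P μ₁ π πt h)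
      ≤ ∑ _h ∈ range H, expF H P μ₁ π πt
          fun k s a => l1 (P k s a (dens P μ₁ π k)) (Pt k s a (dens Pt μ₁ π k)) :=
        sum_le_sum fun h hh => (l1_densF_le_expF hμ₁ hP hPt hπ hπt h (mem_range.mp hh).le).trans
          (expF_mono_horizon hμ₁ hP hπ hπt (fun _ _ _ _ => l1_nonneg _ _) (mem_range.mp hh).le)
    _ = _ := by rw [sum_const, card_range, nsmul_eq_mul]

lemma expF_le_expF_add_sum_l1_densF (hμ₁ : μ₁ ∈ stdSimplex ℝ S) (hP : IsKernel H P)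
    (hPt : IsKernel H Pt) (hπ : IsPolicy π) (hπt : IsPolicy πt) {f : ℕ → S → A → ℝ}
    (hf : ∀ h < H, ∀ s a, f h s a ∈ Set.Icc 0 2) :
    expF H Pt μ₁ π πt f ≤
      expF H P μ₁ π πt f + ∑ h ∈ range H, l1 (densF Pt μ₁ π πt h) (densF P μ₁ π πt h) := by
  rw [expF, expF, ← sum_add_distrib]
  refine sum_le_sum fun h hh => ?_
  have hh := mem_range.mp hh
  have hmass : ∑ s, densF Pt μ₁ π πt h s = ∑ s, densF P μ₁ π πt h s := by
    rw [(densF_mem_stdSimplex hμ₁ hPt hπ hπt h hh.le).2,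
      (densF_mem_stdSimplex hμ₁ hP hπ hπt h hh.le).2]
  have havg : ∀ s, ∑ a, πt h s a * f h s a ∈ Set.Icc 0 2 := fun s =>
    ⟨sum_nonneg fun a _ => mul_nonneg ((hπt h s).1 a) (hf h hh s a).1,
      calc ∑ a, πt h s a * f h s a ≤ ∑ a, πt h s a * 2 :=
            sum_le_sum fun a _ => mul_le_mul_of_nonneg_left (hf h hh s a).2 ((hπt h s).1 a)
        _ = 2 := by rw [← sum_mul, (hπt h s).2, one_mul]⟩
  simpa only [mul_assoc, ← mul_sum] using sum_mul_le_sum_mul_add_l1 hmass havg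

end MeanFieldMDP

/-- **Change of measure.** For any three mean-field MDPs `M, M̃, M̄` and
policies `π, π̃`:
`E_{π̃,M̃(π)}[Σ ‖P_{M̃} − P_{M̄}‖₁] ≤ E_{π̃,M(π)}[Σ ‖P_M − P_{M̄}‖₁] + (H+1)·E_{π̃,M(π)}[Σ ‖P_M − P_{M̃}‖₁]`,
with all kernels evaluated at the densities induced by `π` in the respective models. -/
theorem change_of_measure {S A : Type*} [Fintype S] [Fintype A] (H : ℕ)
    (P Pt Pb : ℕ → S → A → (S → ℝ) → S → ℝ) (μ₁ : S → ℝ) (hμ₁ : μ₁ ∈ stdSimplex ℝ S)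
    (hP : IsKernel H P) (hPt : IsKernel H Pt) (hPb : IsKernel H Pb)
    (π πt : ℕ → S → A → ℝ) (hπ : IsPolicy π) (hπt : IsPolicy πt) :
    expF H Pt μ₁ π πt (fun h s a =>
        l1 (Pt h s a (dens Pt μ₁ π h)) (Pb h s a (dens Pb μ₁ π h))) ≤
      expF H P μ₁ π πt (fun h s a =>
        l1 (P h s a (dens P μ₁ π h)) (Pb h s a (dens Pb μ₁ π h)))
      + (H + 1) * expF H P μ₁ π πt (fun h s a =>
        l1 (P h s a (dens P μ₁ π h)) (Pt h s a (dens Pt μ₁ π h))) := by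
  have hbounded : ∀ h < H, ∀ s a,
      l1 (Pt h s a (dens Pt μ₁ π h)) (Pb h s a (dens Pb μ₁ π h)) ∈ Set.Icc 0 2 :=
    fun h hh s a => ⟨l1_nonneg _ _,
      l1_le_two (hPt h hh s a _ (dens_mem_stdSimplex hμ₁ hPt hπ h hh.le))
        (hPb h hh s a _ (dens_mem_stdSimplex hμ₁ hPb hπ h hh.le))⟩
  have htriangle : ∀ h < H, ∀ s a,
      l1 (Pt h s a (dens Pt μ₁ π h)) (Pb h s a (dens Pb μ₁ π h)) ≤
        l1 (P h s a (dens P μ₁ π h)) (Pb h s a (dens Pb μ₁ π h)) +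
          l1 (P h s a (dens P μ₁ π h)) (Pt h s a (dens Pt μ₁ π h)) :=
    fun h _ s a => (l1_triangle _ (P h s a (dens P μ₁ π h)) _).trans_eq
      (by rw [l1_comm (Pt h s a _), add_comm])
  calc _ ≤ _ + _ := expF_le_expF_add_sum_l1_densF hμ₁ hP hPt hπ hπt hbounded
    _ ≤ _ + _ := add_le_add
        ((expF_mono hμ₁ hP hπ hπt htriangle).trans_eq (expF_add _ _))
        (sum_l1_densF_le hμ₁ hP hPt hπ hπt)
    _ = _ := by ring
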